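/- arXiv:1411.1216 — 6 statements merged into one kernel-verified Lean document; each statement's English description precedes it below -/
import Mathlib

section
/- Let c > 0, x ∈ ℝ, t ∈ ℂ, let p be holomorphic on an open neighbourhood of a point λ₀ ∈ ℂ, and let F(λ₀) ∈ ℂ. Then the kernel V_t(λ₀, μ) extends continuously to the diagonal: lim_{μ → λ₀, μ ≠ λ₀} V_t(λ₀, μ) = (F(λ₀)/(2π)) · ( x·p′(λ₀) + 2t/c ). -/
open MeasureTheory Complex Set Filter Topology

/-!
Write the kernel as `k / (λ₀ - μ) * g μ` with `k = c F₀ / (2π)` and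
`g μ = e^{q(μ)} / (r(μ) + ic) + e^{-q(μ)} / (r(μ) - ic)`, where `q(μ) = (ix/2)(p λ₀ - p μ)` and
`r(μ) = t (λ₀ - μ)`. Since `q` and `r` vanish at `λ₀`, `g λ₀ = 1/(ic) - 1/(ic) = 0`, so the kernel
is `-k` times the difference quotient of `g` at `λ₀` and tends to `-k g'(λ₀)`; differentiating
`g` gives `g'(λ₀) = -(x p'(λ₀) + 2t/c) / c`.
-/

theorem HasDerivAt.tendsto_div_sub_mul {𝕜 : Type*} [NontriviallyNormedField 𝕜] {g : 𝕜 → 𝕜}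
    {g' a : 𝕜} (hg : HasDerivAt g g' a) (hga : g a = 0) (k : 𝕜) :
    Tendsto (fun z => k / (a - z) * g z) (𝓝[≠] a) (𝓝 (-k * g')) := by
  refine ((hasDerivAt_iff_tendsto_slope.mp hg).const_mul (-k)).congr' ?_
  filter_upwards [self_mem_nhdsWithin] with z (hz : z ≠ a)
  have hza : z - a ≠ 0 := sub_ne_zero.mpr hz
  rw [slope_def_field, hga, sub_zero, ← neg_sub z a, div_neg]
  field_simp

theorem hasDerivAt_exp_div_add_exp_div {q₁ q₂ r : ℂ → ℂ} {q₁' q₂' r' s a : ℂ}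
    (h₁ : HasDerivAt q₁ q₁' a) (h₂ : HasDerivAt q₂ q₂' a) (hr : HasDerivAt r r' a)
    (hq₁ : q₁ a = 0) (hq₂ : q₂ a = 0) (hra : r a = 0) (hs : s ≠ 0) :
    HasDerivAt (fun z => exp (q₁ z) / (r z + s) + exp (q₂ z) / (r z - s))
      ((q₁' - q₂') / s - 2 * r' / s ^ 2) a := by
  have hplus : r a + s ≠ 0 := by simpa [hra] using hs
  have hminus : r a - s ≠ 0 := by simpa [hra] using hs
  refine ((h₁.cexp.div (hr.add_const s) hplus).add (h₂.cexp.div (hr.sub_const s) hminus)).congr_deriv ?_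
  rw [hq₁, hq₂, hra, exp_zero, zero_add, zero_sub]
  field_simp
  ring

/-- for `p` holomorphic on an open neighbourhood of `λ₀` and `F₀ = F(λ₀) ∈ ℂ`,
the c-shifted kernel `μ ↦ V_t(λ₀,μ)` extends continuously to the diagonal with value
`(F(λ₀)/(2π)) (x p'(λ₀) + 2t/c)`. -/
theorem stmt2 (c x : ℝ) (hc : 0 < c) (t : ℂ) (p : ℂ → ℂ) (F₀ : ℂ) (lam₀ : ℂ)
    (U : Set ℂ) (hU : IsOpen U) (hmem : lam₀ ∈ U) (hp : DifferentiableOn ℂ p U) :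
    Filter.Tendsto
      (fun mu : ℂ =>
        (Complex.I * c * F₀) / (2 * Real.pi * Complex.I * (lam₀ - mu)) *
          (Complex.exp ((Complex.I * x / 2) * (p lam₀ - p mu)) / (t * (lam₀ - mu) + Complex.I * c)
            + Complex.exp ((Complex.I * x / 2) * (p mu - p lam₀)) / (t * (lam₀ - mu) - Complex.I * c)))
      (𝓝[≠] lam₀)
      (𝓝 ((F₀ / (2 * Real.pi)) * (x * deriv p lam₀ + 2 * t / c))) := by
  have hc₀ : (c : ℂ) ≠ 0 := by exact_mod_cast hc.ne'
  have hp' : HasDerivAt p (deriv p lam₀) lam₀ :=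
    (hp.differentiableAt (hU.mem_nhds hmem)).hasDerivAt
  have hg := hasDerivAt_exp_div_add_exp_div
    ((hp'.const_sub (p lam₀)).const_mul (I * x / 2)) ((hp'.sub_const (p lam₀)).const_mul (I * x / 2))
    (((hasDerivAt_id' lam₀).const_sub lam₀).const_mul t)
    (by simp) (by simp) (by simp) (mul_ne_zero I_ne_zero hc₀)
  have hga : exp ((I * x / 2) * (p lam₀ - p lam₀)) / (t * (lam₀ - lam₀) + I * c)
      + exp ((I * x / 2) * (p lam₀ - p lam₀)) / (t * (lam₀ - lam₀) - I * c) = 0 := by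
    simp
  convert hg.tendsto_div_sub_mul hga (I * c * F₀ / (2 * Real.pi * I)) using 2
  · rw [div_mul_eq_div_div]
  · have hπ : (Real.pi : ℂ) ≠ 0 := by exact_mod_cast Real.pi_ne_zero
    field_simp
    ring_nf
    simp only [I_sq]
    ring
end

section
/- Let H be a complex Banach space, m₁, m₂ ∈ H, κ₁, κ₂ continuous linear functionals on H with κ₁(m₁) = 1 and κ₂(m₂) = 1, let F ∈ ℂ with 1 + F ≠ 0, and let ω ∈ ℂ with ω ≠ 0. Then the 2×2 block operator matrix G = [[id − F·(m₁⊗κ₁), Fω·(m₁⊗κ₂)], [−Fω⁻¹·(m₂⊗κ₁), id + F·(m₂⊗κ₂)]] acting on H × H factorises as G = [[id, (Fω/(1+F))·(m₁⊗κ₂)], [0, id]] ∘ [[id − (F/(1+F))·(m₁⊗κ₁), 0], [0, id + F·(m₂⊗κ₂)]] ∘ [[id, 0], [−(Fω⁻¹/(1+F))·(m₂⊗κ₁), id]]. -/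
/-- The 2×2 block operator `[[A, B], [C, D]]` acting on `H × H`. -/
noncomputable def blockOp {H : Type*} [NormedAddCommGroup H] [NormedSpace ℂ H]
    (A B C D : H →L[ℂ] H) : (H × H) →L[ℂ] (H × H) :=
  (A.comp (ContinuousLinearMap.fst ℂ H H) + B.comp (ContinuousLinearMap.snd ℂ H H)).prod
    (C.comp (ContinuousLinearMap.fst ℂ H H) + D.comp (ContinuousLinearMap.snd ℂ H H))

lemma blockOp_comp {H : Type*} [NormedAddCommGroup H] [NormedSpace ℂ H]
    (A B C D A' B' C' D' : H →L[ℂ] H) :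
    (blockOp A B C D).comp (blockOp A' B' C' D') =
      blockOp (A.comp A' + B.comp C') (A.comp B' + B.comp D')
        (C.comp A' + D.comp C') (C.comp B' + D.comp D') := by
  refine ContinuousLinearMap.ext fun p => Prod.ext ?_ ?_ <;>
    simp [blockOp, map_add] <;> abel

lemma blockOp_congr {H : Type*} [NormedAddCommGroup H] [NormedSpace ℂ H]
    {A B C D A' B' C' D' : H →L[ℂ] H} (hA : A = A') (hB : B = B') (hC : C = C')
    (hD : D = D') : blockOp A B C D = blockOp A' B' C' D' := by
  rw [hA, hB, hC, hD]

lemma rankOne_comp {H : Type*} [NormedAddCommGroup H] [NormedSpace ℂ H]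
    (κ κ' : H →L[ℂ] ℂ) (m m' : H) :
    (κ.smulRight m).comp (κ'.smulRight m') = (κ m') • (κ'.smulRight m) := by
  ext f
  simp [smul_smul, mul_comm]

/-- factorisation of the jump matrix
`G = [[id - F m₁⊗κ₁, Fω m₁⊗κ₂], [-Fω⁻¹ m₂⊗κ₁, id + F m₂⊗κ₂]]` into upper-triangular,
diagonal and lower-triangular block operator factors on `H × H`. -/
theorem stmt6 {H : Type*} [NormedAddCommGroup H] [NormedSpace ℂ H] [CompleteSpace H]
    (m₁ m₂ : H) (κ₁ κ₂ : H →L[ℂ] ℂ) (hκ₁ : κ₁ m₁ = 1) (hκ₂ : κ₂ m₂ = 1)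
    (F ω : ℂ) (hF : 1 + F ≠ 0) (hω : ω ≠ 0) :
    blockOp (ContinuousLinearMap.id ℂ H - F • κ₁.smulRight m₁)
        ((F * ω) • κ₂.smulRight m₁)
        (-(F * ω⁻¹) • κ₁.smulRight m₂)
        (ContinuousLinearMap.id ℂ H + F • κ₂.smulRight m₂)
      = ((blockOp (ContinuousLinearMap.id ℂ H) ((F * ω / (1 + F)) • κ₂.smulRight m₁)
            0 (ContinuousLinearMap.id ℂ H)).comp
          (blockOp (ContinuousLinearMap.id ℂ H - (F / (1 + F)) • κ₁.smulRight m₁) 0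
            0 (ContinuousLinearMap.id ℂ H + F • κ₂.smulRight m₂))).comp
        (blockOp (ContinuousLinearMap.id ℂ H) 0
          (-(F * ω⁻¹ / (1 + F)) • κ₁.smulRight m₂) (ContinuousLinearMap.id ℂ H)) := by
  rw [blockOp_comp, blockOp_comp]
  refine blockOp_congr ?_ ?_ ?_ ?_ <;>
    simp only [ContinuousLinearMap.comp_add, ContinuousLinearMap.add_comp,
      ContinuousLinearMap.comp_smul, ContinuousLinearMap.smul_comp,
      ContinuousLinearMap.comp_sub, ContinuousLinearMap.sub_comp,
      ContinuousLinearMap.comp_zero, ContinuousLinearMap.zero_comp,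
      ContinuousLinearMap.comp_neg, ContinuousLinearMap.neg_comp,
      ContinuousLinearMap.comp_id, ContinuousLinearMap.id_comp,
      rankOne_comp, hκ₁, hκ₂, smul_smul, one_smul, add_zero, zero_add,
      smul_zero, smul_add, smul_sub, smul_neg, neg_smul, mul_one]
      <;> match_scalars <;> field_simp <;> ring
end

section
/- Let a < b be real numbers and let f be holomorphic on ℂ∖[a,b]. Assume: (i) f admits a continuous extension to ℂ∖{a,b}, i.e. there is a continuous function g on ℂ∖{a,b} agreeing with f on ℂ∖[a,b] (so the boundary values of f from above and below the open interval (a,b) exist, are continuous, and coincide); (ii) there exist C > 0 and δ > 0 such that |f(λ)| ≤ C·|log|λ−a||·|log|λ−b|| for all λ ∉ [a,b] with 0 < min(|λ−a|, |λ−b|) < δ; (iii) f(λ) → 1 as |λ| → ∞. Then f(λ) = 1 for all λ ∈ ℂ∖[a,b]. -/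
/-!
The continuous extension `g` of `f` is holomorphic off `{a, b}` by Morera's theorem: a rectangle
meeting the real axis splits along it into two rectangles whose interiors avoid the segment, and
on each of these the Cauchy–Goursat theorem applies. Near `a` the bound `‖g z‖ ≤ K |log ‖z - a‖|`
holds off the segment, hence on a whole punctured disc because the complement of the segment is
dense; as `log ‖z - a‖ = o((z - a)⁻¹)`, `a` (and likewise `b`) is a removable singularity. The
resulting entire function agrees with `f` off the segment, tends to `1` at infinity, and is
therefore `≡ 1` by Liouville's theorem.
-/

open Complex Filter Set Bornology
open Topology Asymptotics intervalIntegral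
open scoped Interval

namespace Complex

section Morera

variable {E : Type*} [NormedAddCommGroup E] [NormedSpace ℂ E] {f : ℂ → E} {z w : ℂ}

theorem wedgeIntegral_add_wedgeIntegral_eq_zero_of_zero_notMem_uIoo
    (hc : ContinuousOn f (Rectangle z w))
    (hd : ∀ x ∈ Rectangle z w, x.im ≠ 0 → DifferentiableAt ℂ f x)
    (h0 : (0 : ℝ) ∉ uIoo z.im w.im) :
    wedgeIntegral z w f + wedgeIntegral w z f = 0 := by
  rw [wedgeIntegral_add_wedgeIntegral_eq]
  refine integral_boundary_rect_eq_zero_of_continuousOn_of_differentiableOn f z w hc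
    fun x hx => (hd x ?_ ?_).differentiableWithinAt
  · exact ⟨Ioo_subset_Icc_self hx.1, Ioo_subset_Icc_self hx.2⟩
  · exact fun h => h0 (h ▸ hx.2)

theorem wedgeIntegral_add_wedgeIntegral_eq_add (hc : ContinuousOn f (Rectangle z w)) {t : ℝ}
    (ht : t ∈ [[z.im, w.im]]) :
    wedgeIntegral z w f + wedgeIntegral w z f =
      (wedgeIntegral z ⟨w.re, t⟩ f + wedgeIntegral ⟨w.re, t⟩ z f) +
        (wedgeIntegral ⟨z.re, t⟩ w f + wedgeIntegral w ⟨z.re, t⟩ f) := by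
  have hvert : ∀ s ∈ [[z.re, w.re]], ∀ u v, [[u, v]] ⊆ [[z.im, w.im]] →
      IntervalIntegrable (fun y : ℝ => f (s + y * I)) MeasureTheory.volume u v := by
    intro s hs u v huv
    refine (hc.comp (by fun_prop) fun y hy => ?_).intervalIntegrable
    exact ⟨by simpa using hs, by simpa using huv hy⟩
  simp only [wedgeIntegral_add_wedgeIntegral_eq]
  rw [← integral_add_adjacent_intervals
      (hvert w.re right_mem_uIcc _ _ (uIcc_subset_uIcc_left ht))
      (hvert w.re right_mem_uIcc _ _ (uIcc_subset_uIcc_right ht)),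
    ← integral_add_adjacent_intervals
      (hvert z.re left_mem_uIcc _ _ (uIcc_subset_uIcc_left ht))
      (hvert z.re left_mem_uIcc _ _ (uIcc_subset_uIcc_right ht))]
  simp only [smul_add]
  abel

theorem differentiableOn_of_continuousOn_of_differentiableAt_im_ne_zero [CompleteSpace E]
    {U : Set ℂ} (hU : IsOpen U) (hc : ContinuousOn f U)
    (hd : ∀ z ∈ U, z.im ≠ 0 → DifferentiableAt ℂ f z) : DifferentiableOn ℂ f U := by
  refine (isConservativeOn_and_continuousOn_iff_isDifferentiableOn hU).mp ⟨?_, hc⟩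
  intro z w hzw
  rw [← add_eq_zero_iff_eq_neg]
  have hcR := hc.mono hzw
  have hdR : ∀ x ∈ Rectangle z w, x.im ≠ 0 → DifferentiableAt ℂ f x :=
    fun x hx => hd x (hzw hx)
  by_cases h0 : (0 : ℝ) ∈ [[z.im, w.im]]
  · have hlow : Rectangle z ⟨w.re, 0⟩ ⊆ Rectangle z w :=
      fun x hx => ⟨hx.1, uIcc_subset_uIcc_left h0 hx.2⟩
    have hupp : Rectangle ⟨z.re, 0⟩ w ⊆ Rectangle z w :=
      fun x hx => ⟨hx.1, uIcc_subset_uIcc_right h0 hx.2⟩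
    rw [wedgeIntegral_add_wedgeIntegral_eq_add hcR h0,
      wedgeIntegral_add_wedgeIntegral_eq_zero_of_zero_notMem_uIoo (hcR.mono hlow)
        (fun x hx => hdR x (hlow hx)) right_notMem_uIoo,
      wedgeIntegral_add_wedgeIntegral_eq_zero_of_zero_notMem_uIoo (hcR.mono hupp)
        (fun x hx => hdR x (hupp hx)) left_notMem_uIoo, add_zero]
  · exact wedgeIntegral_add_wedgeIntegral_eq_zero_of_zero_notMem_uIoo hcR hdR
      fun h => h0 (Ioo_subset_Icc_self h)

theorem differentiableOn_of_eqOn_compl_of_subset_range_ofReal {g : ℂ → E} [CompleteSpace E]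
    {S U : Set ℂ} (hS : IsClosed S) (hSR : S ⊆ range ((↑) : ℝ → ℂ)) (hU : IsOpen U)
    (hf : DifferentiableOn ℂ f Sᶜ) (hg : ContinuousOn g U) (hgf : EqOn g f Sᶜ) :
    DifferentiableOn ℂ g U := by
  refine differentiableOn_of_continuousOn_of_differentiableAt_im_ne_zero hU hg fun z _ hz => ?_
  have hzS : z ∉ S := fun hzS => hz <| by
    obtain ⟨x, rfl⟩ := hSR hzS
    exact ofReal_im x
  have hnhds : Sᶜ ∈ 𝓝 z := hS.isOpen_compl.mem_nhds hzS
  exact ((hf z hzS).differentiableAt hnhds).congr_of_eventuallyEq (eventually_of_mem hnhds hgf)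

end Morera

theorem exists_differentiable_eqOn_compl_of_isLittleO {E : Type*} [NormedAddCommGroup E]
    [NormedSpace ℂ E] [CompleteSpace E] {g : ℂ → E} (s : Finset ℂ)
    (hd : DifferentiableOn ℂ g (↑s)ᶜ) (ho : ∀ c ∈ s, g =o[𝓝[≠] c] fun z => (z - c)⁻¹) :
    ∃ h : ℂ → E, Differentiable ℂ h ∧ EqOn h g (↑s)ᶜ := by
  induction s using Finset.induction_on generalizing g with
  | empty => exact ⟨g, differentiableOn_univ.mp (by simpa using hd), fun _ _ => rfl⟩
  | insert c s hc ih =>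
    have hcompl : ((↑(insert c s) : Set ℂ))ᶜ = (↑s)ᶜ \ {c} := by
      ext z; simp [and_comm]
    have hsc : (↑s : Set ℂ)ᶜ ∈ 𝓝 c := s.finite_toSet.isClosed.isOpen_compl.mem_nhds hc
    set g' := Function.update g c (limUnder (𝓝[≠] c) g)
    have hg' : ∀ z ≠ c, g' z = g z := fun z hz => Function.update_of_ne hz _ _
    have hd' : DifferentiableOn ℂ g' (↑s)ᶜ := by
      rw [hcompl] at hd
      refine (differentiableOn_update_limUnder_insert_of_isLittleO
        (sdiff_mem_nhdsWithin_compl hsc _) hd ?_).mono (subset_insert_sdiff_singleton _ _)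
      exact (ho c (Finset.mem_insert_self c s)).sub isBoundedUnder_const.isLittleO_sub_self_inv
    have ho' : ∀ d ∈ s, g' =o[𝓝[≠] d] fun z => (z - d)⁻¹ := by
      intro d hd
      refine (ho d (Finset.mem_insert_of_mem hd)).congr' ?_ EventuallyEq.rfl
      have hdc : d ≠ c := fun h => hc (h ▸ hd)
      filter_upwards [nhdsWithin_le_nhds (compl_singleton_mem_nhds hdc)] with z hz
      exact (hg' z hz).symm
    obtain ⟨h, hh, hhg⟩ := ih hd' ho'
    refine ⟨h, hh, fun z hz => ?_⟩
    rw [hcompl] at hz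
    exact (hhg hz.1).trans (hg' z hz.2)

theorem dense_compl_range_ofReal : Dense (range ((↑) : ℝ → ℂ))ᶜ := by
  rw [← interior_eq_empty_iff_dense_compl]
  have : range ((↑) : ℝ → ℂ) = univ ×ℂ {0} := by
    ext z; simp [mem_reProdIm, Complex.ext_iff, eq_comm]
  simp [this, interior_reProdIm]

end Complex

theorem isLittleO_log_norm_sub_self_inv {𝕜 : Type*} [NormedField 𝕜] (c : 𝕜) :
    (fun z => Real.log ‖z - c‖) =o[𝓝[≠] c] fun z => (z - c)⁻¹ := by
  have := (isLittleO_log_rpow_nhdsGT_zero (r := -1) (by norm_num)).comp_tendsto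
    (tendsto_norm_sub_self_nhdsNE c)
  refine isLittleO_norm_right.mp ?_
  simpa [Function.comp_def, Real.rpow_neg_one] using this

theorem Dense.eventually_le_of_eventually_notMem {X α : Type*} [TopologicalSpace X] [T1Space X]
    [LinearOrder α] [TopologicalSpace α] [OrderClosedTopology α] {S : Set X} (hS : Dense Sᶜ)
    {u v : X → α} {c : X} (hu : ∀ᶠ z in 𝓝[≠] c, ContinuousAt u z)
    (hv : ∀ᶠ z in 𝓝[≠] c, ContinuousAt v z) (h : ∀ᶠ z in 𝓝[≠] c, z ∉ S → u z ≤ v z) :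
    ∀ᶠ z in 𝓝[≠] c, u z ≤ v z := by
  filter_upwards [hu, hv, eventually_eventually_nhdsWithin.mpr h, self_mem_nhdsWithin]
    with z huz hvz hz hzc
  rw [isOpen_compl_singleton.nhdsWithin_eq hzc] at hz
  have := mem_closure_iff_nhdsWithin_neBot.mp (hS z)
  exact le_of_tendsto_of_tendsto (huz.tendsto.mono_left nhdsWithin_le_nhds)
    (hvz.tendsto.mono_left nhdsWithin_le_nhds)
    (show ∀ᶠ w in 𝓝[Sᶜ] z, u w ≤ v w from eventually_nhdsWithin_iff.mpr hz)

section LogarithmicBound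

variable {E : Type*} [NormedAddCommGroup E]

theorem eventually_norm_le_mul_abs_log_of_notMem {V : Type*} [NormedAddCommGroup V] {f : V → E}
    {S : Set V} {a b : V} (hab : a ≠ b) {C δ : ℝ} (hC : 0 ≤ C) (hδ : 0 < δ)
    (h : ∀ z ∉ S, 0 < min ‖z - a‖ ‖z - b‖ → min ‖z - a‖ ‖z - b‖ < δ →
      ‖f z‖ ≤ C * |Real.log ‖z - a‖| * |Real.log ‖z - b‖|) :
    ∃ K, ∀ᶠ z in 𝓝[≠] a, z ∉ S → ‖f z‖ ≤ K * |Real.log ‖z - a‖| := by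
  set M := |Real.log ‖a - b‖| + 1
  refine ⟨C * M, ?_⟩
  have hlog : ContinuousAt (fun z => |Real.log ‖z - b‖|) a := by
    have : ‖a - b‖ ≠ 0 := norm_ne_zero_iff.mpr (sub_ne_zero.mpr hab)
    fun_prop (disch := assumption)
  have hM : ∀ᶠ z in 𝓝 a, |Real.log ‖z - b‖| < M :=
    hlog.eventually_lt continuousAt_const (lt_add_one _)
  have hδa : ∀ᶠ z in 𝓝 a, ‖z - a‖ < δ := by
    simpa using (continuous_id.sub continuous_const).norm.continuousAt.eventually_lt
      (continuousAt_const (y := δ)) (by simpa using hδ)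
  filter_upwards [self_mem_nhdsWithin,
    nhdsWithin_le_nhds (hM.and ((eventually_ne_nhds hab).and hδa))]
    with z hza ⟨hzM, hzb, hzδ⟩ hzS
  have hpos : 0 < min ‖z - a‖ ‖z - b‖ :=
    lt_min (norm_pos_iff.mpr (sub_ne_zero.mpr hza)) (norm_pos_iff.mpr (sub_ne_zero.mpr hzb))
  calc ‖f z‖ ≤ C * |Real.log ‖z - a‖| * |Real.log ‖z - b‖| :=
        h z hzS hpos (min_lt_of_left_lt hzδ)
    _ ≤ C * |Real.log ‖z - a‖| * M := by gcongr
    _ = C * M * |Real.log ‖z - a‖| := by ring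

theorem isLittleO_sub_self_inv_of_norm_le_mul_abs_log {g : ℂ → E} {S : Set ℂ} (hS : Dense Sᶜ)
    {a b : ℂ} (hab : a ≠ b) (hg : ContinuousOn g {a, b}ᶜ) {C δ : ℝ} (hC : 0 ≤ C) (hδ : 0 < δ)
    (h : ∀ z ∉ S, 0 < min ‖z - a‖ ‖z - b‖ → min ‖z - a‖ ‖z - b‖ < δ →
      ‖g z‖ ≤ C * |Real.log ‖z - a‖| * |Real.log ‖z - b‖|) :
    g =o[𝓝[≠] a] fun z => (z - a)⁻¹ := by
  obtain ⟨K, hK⟩ := eventually_norm_le_mul_abs_log_of_notMem hab hC hδ h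
  have hgc : ∀ᶠ z in 𝓝[≠] a, ContinuousAt (fun z => ‖g z‖) z := by
    filter_upwards [self_mem_nhdsWithin, nhdsWithin_le_nhds (eventually_ne_nhds hab)]
      with z hza hzb
    exact (hg.continuousAt ((toFinite {a, b}).isClosed.isOpen_compl.mem_nhds
      (by simp_all))).norm
  have hlogc : ∀ᶠ z in 𝓝[≠] a, ContinuousAt (fun z => K * |Real.log ‖z - a‖|) z := by
    filter_upwards [self_mem_nhdsWithin] with z hza
    have : ‖z - a‖ ≠ 0 := norm_ne_zero_iff.mpr (sub_ne_zero.mpr hza)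
    fun_prop (disch := assumption)
  have hbound := hS.eventually_le_of_eventually_notMem hgc hlogc hK
  exact (IsBigO.of_bound K (by simpa only [Real.norm_eq_abs] using hbound)).trans_isLittleO
    (isLittleO_log_norm_sub_self_inv a)

end LogarithmicBound

theorem Differentiable.eq_of_eqOn_compl_of_tendsto_cobounded {E : Type*} [NormedAddCommGroup E]
    [NormedSpace ℂ E] {h f : ℂ → E} (hh : Differentiable ℂ h) {S : Set ℂ} (hS : IsBounded S)
    (hhf : EqOn h f Sᶜ) {c : E} (hf : Tendsto f (cobounded ℂ) (𝓝 c)) (z : ℂ) : h z = c := by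
  refine hh.apply_eq_of_tendsto_cocompact z ?_
  rw [← Metric.cobounded_eq_cocompact]
  exact hf.congr' (eventually_of_mem (isBounded_def.mp hS) fun z hz => (hhf hz).symm)

/-- the scalar Riemann–Hilbert problem for the determinant `γ`.
If `f` is holomorphic on `ℂ ∖ [a,b]`, extends continuously to `ℂ ∖ {a,b}`
(equal boundary values on `(a,b)`), has at most logarithmic growth at the endpoints
and tends to `1` at infinity, then `f ≡ 1` off the segment. -/
theorem stmt7 (a b : ℝ) (hab : a < b) (f : ℂ → ℂ)
    (hf : DifferentiableOn ℂ f ((fun x : ℝ => (x : ℂ)) '' Set.Icc a b)ᶜ)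
    (hcont : ∃ g : ℂ → ℂ, ContinuousOn g {(a : ℂ), (b : ℂ)}ᶜ ∧
      ∀ z ∈ ((fun x : ℝ => (x : ℂ)) '' Set.Icc a b)ᶜ, g z = f z)
    (hbound : ∃ C > (0 : ℝ), ∃ δ > (0 : ℝ),
      ∀ lam : ℂ, lam ∉ (fun x : ℝ => (x : ℂ)) '' Set.Icc a b →
        0 < min ‖lam - (a : ℂ)‖ ‖lam - (b : ℂ)‖ →
        min ‖lam - (a : ℂ)‖ ‖lam - (b : ℂ)‖ < δ →
        ‖f lam‖ ≤ C * |Real.log ‖lam - (a : ℂ)‖| * |Real.log ‖lam - (b : ℂ)‖|)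
    (hinf : Filter.Tendsto f (cobounded ℂ) (nhds 1)) :
    ∀ lam : ℂ, lam ∉ (fun x : ℝ => (x : ℂ)) '' Set.Icc a b → f lam = 1 := by
  obtain ⟨g, hgc, hgf⟩ := hcont
  obtain ⟨C, hC, δ, hδ, hfC⟩ := hbound
  set S := (fun x : ℝ => (x : ℂ)) '' Icc a b
  have hSc : IsCompact S := isCompact_Icc.image continuous_ofReal
  have hSR : S ⊆ range ((↑) : ℝ → ℂ) := image_subset_range _ _
  have hSdense : Dense Sᶜ := dense_compl_range_ofReal.mono (compl_subset_compl.mpr hSR)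
  have hab' : (a : ℂ) ≠ b := by exact_mod_cast hab.ne
  have hgd : DifferentiableOn ℂ g {(a : ℂ), (b : ℂ)}ᶜ :=
    differentiableOn_of_eqOn_compl_of_subset_range_ofReal hSc.isClosed hSR
      (toFinite _).isClosed.isOpen_compl hf hgc hgf
  have hgC : ∀ z ∉ S, 0 < min ‖z - a‖ ‖z - b‖ → min ‖z - a‖ ‖z - b‖ < δ →
      ‖g z‖ ≤ C * |Real.log ‖z - a‖| * |Real.log ‖z - b‖| := fun z hz => hgf z hz ▸ hfC z hz
  have hoa := isLittleO_sub_self_inv_of_norm_le_mul_abs_log hSdense hab' hgc hC.le hδ hgC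
  have hob := isLittleO_sub_self_inv_of_norm_le_mul_abs_log hSdense hab'.symm
    (pair_comm (a : ℂ) b ▸ hgc) hC.le hδ
    fun z hz => by simpa only [min_comm, mul_right_comm] using hgC z hz
  obtain ⟨h, hh, hhg⟩ := exists_differentiable_eqOn_compl_of_isLittleO {(a : ℂ), (b : ℂ)}
    (by simpa using hgd) (by simpa using ⟨hoa, hob⟩)
  have hendpoints : ((({(a : ℂ), (b : ℂ)} : Finset ℂ)) : Set ℂ) ⊆ S := by
    simp only [Finset.coe_insert, Finset.coe_singleton, insert_subset_iff, singleton_subset_iff]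
    exact ⟨⟨a, left_mem_Icc.mpr hab.le, rfl⟩, ⟨b, right_mem_Icc.mpr hab.le, rfl⟩⟩
  have hhf : EqOn h f Sᶜ := fun z hz =>
    (hhg (compl_subset_compl.mpr hendpoints hz)).trans (hgf z hz)
  intro lam hlam
  rw [← hhf hlam]
  exact hh.eq_of_eqOn_compl_of_tendsto_cobounded hSc.isBounded hhf hinf lam
end

section
/- Let a < b be real, U ⊆ ℂ open with [a,b] ⊂ U, F holomorphic on U with 1 + F(λ) ∉ (−∞,0] on U, ν(λ) = −(1/(2πi))·Log(1+F(λ)), and α(λ) = exp(∫_a^b ν(μ)/(μ−λ) dμ) for λ ∉ [a,b]. Then for every λ₀ ∈ (a,b) the one-sided limits α₊(λ₀) = lim_{ε→0⁺} α(λ₀ + iε) and α₋(λ₀) = lim_{ε→0⁺} α(λ₀ − iε) exist, are nonzero, and satisfy the multiplicative jump relation α₊(λ₀)·(1 + F(λ₀)) = α₋(λ₀). -/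
open Complex Set MeasureTheory intervalIntegral Filter Topology

/-! Sokhotski–Plemelj. Subtracting `ν(λ₀)` splits the Cauchy integral into a regular part
`∫ (ν μ - ν λ₀)/(μ - λ)`, which converges by dominated convergence as `λ → λ₀` vertically because
`ν` is Lipschitz on `[a,b]`, plus `ν(λ₀) (log (b - λ) - log (a - λ))`. Only `log (a - λ)` crosses
the branch cut: it tends to `log (λ₀ - a) ∓ πi` from above and below. So the two boundary values
of the exponent differ by `2πi ν(λ₀) = -Log (1 + F λ₀)`, which is the jump relation. -/

lemma ofReal_sub_ne_zero_of_im_ne_zero {z : ℂ} (hz : z.im ≠ 0) (x : ℝ) : (x : ℂ) - z ≠ 0 :=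
  sub_ne_zero.2 fun h => hz (by simp [← h])

lemma mem_slitPlane_of_forall_ne_ofReal {w : ℂ} (h : ∀ r : ℝ, r ≤ 0 → w ≠ r) :
    w ∈ slitPlane := by
  rw [mem_slitPlane_iff_not_le_zero]
  intro hw
  exact h w.re (by simpa using re_le_re hw) (ext rfl (by simpa using (le_def.1 hw).2))

lemma norm_ofReal_sub_ofReal_of_lt {a x : ℝ} (h : a < x) : ‖(a : ℂ) - x‖ = x - a := by
  rw [← ofReal_sub, norm_real, Real.norm_of_nonpos (sub_neg.2 h).le, neg_sub]

lemma integral_inv_ofReal_sub {z : ℂ} (hz : z.im ≠ 0) (a b : ℝ) :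
    ∫ x in a..b, ((x : ℂ) - z)⁻¹ = log (b - z) - log (a - z) := by
  refine integral_eq_sub_of_hasDerivAt (f := fun x : ℝ => log (x - z)) (fun x _ => ?_) ?_
  · have hslit : (x : ℂ) - z ∈ slitPlane := Or.inr (by simpa using hz)
    simpa using ((hasDerivAt_log hslit).comp (x : ℂ) ((hasDerivAt_id _).sub_const z)).comp_ofReal
  · exact ((continuous_ofReal.sub continuous_const).continuousOn.inv₀
      fun x _ => ofReal_sub_ne_zero_of_im_ne_zero hz x).intervalIntegrable

lemma integral_div_ofReal_sub_eq {f : ℝ → ℂ} {a b : ℝ} (hf : ContinuousOn f (uIcc a b)) (c : ℂ)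
    {z : ℂ} (hz : z.im ≠ 0) :
    ∫ x in a..b, f x / (x - z)
      = (∫ x in a..b, (f x - c) / (x - z)) + c * (log (b - z) - log (a - z)) := by
  have hden : ContinuousOn (fun x : ℝ => (x : ℂ) - z) (uIcc a b) := by fun_prop
  have hne : ∀ x ∈ uIcc a b, (x : ℂ) - z ≠ 0 := fun x _ => ofReal_sub_ne_zero_of_im_ne_zero hz x
  have hreg : IntervalIntegrable (fun x : ℝ => (f x - c) / (x - z)) volume a b :=
    ((hf.sub continuousOn_const).div hden hne).intervalIntegrable
  have hsing : IntervalIntegrable (fun x : ℝ => c * ((x : ℂ) - z)⁻¹) volume a b :=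
    (continuousOn_const.mul (hden.inv₀ hne)).intervalIntegrable
  rw [← integral_inv_ofReal_sub hz, ← intervalIntegral.integral_const_mul,
    ← integral_add hreg hsing]
  refine integral_congr fun x _ => ?_
  field_simp [ofReal_sub_ne_zero_of_im_ne_zero hz x]
  ring

-- A vertical approach keeps `|x - x₀| ≤ ‖x - z‖`, so the Lipschitz constant dominates.
lemma tendsto_integral_sub_div_ofReal_sub {f : ℝ → ℂ} {a b x₀ : ℝ} {K : NNReal}
    (hf : LipschitzOnWith K f (uIcc a b)) (hx₀ : x₀ ∈ uIcc a b)
    {ι : Type*} {l : Filter ι} [l.IsCountablyGenerated] {z : ι → ℂ} (hz : Tendsto z l (𝓝 x₀))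
    (hre : ∀ᶠ i in l, (z i).re = x₀) (him : ∀ᶠ i in l, (z i).im ≠ 0) :
    Tendsto (fun i => ∫ x in a..b, (f x - f x₀) / (x - z i)) l
      (𝓝 (∫ x in a..b, (f x - f x₀) / (x - x₀))) := by
  refine tendsto_integral_filter_of_dominated_convergence (fun _ => (K : ℝ)) ?_ ?_
    intervalIntegrable_const ?_
  · filter_upwards [him] with i hi
    exact (((hf.continuousOn.sub continuousOn_const).div (by fun_prop)
      fun x _ => ofReal_sub_ne_zero_of_im_ne_zero hi x).mono
        uIoc_subset_uIcc).aestronglyMeasurable measurableSet_uIoc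
  · filter_upwards [hre] with i hi
    refine ae_of_all _ fun x hx => ?_
    have hdist : |x - x₀| ≤ ‖(x : ℂ) - z i‖ := by
      simpa [hi] using abs_re_le_norm ((x : ℂ) - z i)
    have hnum : ‖f x - f x₀‖ ≤ K * ‖(x : ℂ) - z i‖ :=
      (lipschitzOnWith_iff_norm_sub_le.1 hf (uIoc_subset_uIcc hx) hx₀).trans
        (mul_le_mul_of_nonneg_left hdist K.2)
    rw [norm_div]
    exact div_le_of_le_mul₀ (norm_nonneg _) K.2 hnum
  · filter_upwards [volume.ae_ne x₀] with x hx _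
    exact tendsto_const_nhds.div (tendsto_const_nhds.sub hz)
      (sub_ne_zero.2 (by exact_mod_cast hx))

-- `p.v. ∫_a^b f x / (x - x₀) dx`, in the form that converges absolutely for Lipschitz `f`.
noncomputable def cauchyPrincipalValue (f : ℝ → ℂ) (a b x₀ : ℝ) : ℂ :=
  (∫ x in a..b, (f x - f x₀) / (x - x₀)) + f x₀ * (Real.log (b - x₀) - Real.log (x₀ - a))

lemma tendsto_integral_div_ofReal_sub {f : ℝ → ℂ} {a b x₀ : ℝ} {K : NNReal}
    (hf : LipschitzOnWith K f (uIcc a b)) (hx₀ : x₀ ∈ Ioo a b)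
    {ι : Type*} {l : Filter ι} [l.IsCountablyGenerated] {z : ι → ℂ} (hz : Tendsto z l (𝓝 x₀))
    (hre : ∀ᶠ i in l, (z i).re = x₀) (him : ∀ᶠ i in l, (z i).im ≠ 0) {A : ℂ}
    (hA : Tendsto (fun i => log (a - z i)) l (𝓝 (Real.log (x₀ - a) + A))) :
    Tendsto (fun i => ∫ x in a..b, f x / (x - z i)) l
      (𝓝 (cauchyPrincipalValue f a b x₀ - f x₀ * A)) := by
  have hx₀' : x₀ ∈ uIcc a b := by
    rw [uIcc_of_le (hx₀.1.trans hx₀.2).le]; exact Ioo_subset_Icc_self hx₀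
  have hb : Tendsto (fun i => log (b - z i)) l (𝓝 (Real.log (b - x₀))) := by
    rw [ofReal_log (sub_pos.2 hx₀.2).le]
    push_cast
    exact (tendsto_const_nhds.sub hz).clog
      (by exact_mod_cast ofReal_mem_slitPlane.2 (sub_pos.2 hx₀.2))
  have hlim := (tendsto_integral_sub_div_ofReal_sub hf hx₀' hz hre him).add
    ((tendsto_const_nhds (x := f x₀)).mul (hb.sub hA))
  have hvalue : cauchyPrincipalValue f a b x₀ - f x₀ * A
      = (∫ x in a..b, (f x - f x₀) / (x - x₀))
        + f x₀ * (Real.log (b - x₀) - (Real.log (x₀ - a) + A)) := by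
    unfold cauchyPrincipalValue
    ring
  rw [hvalue]
  refine hlim.congr' ?_
  filter_upwards [him] with i hi
  exact (integral_div_ofReal_sub_eq hf.continuousOn (f x₀) hi).symm

lemma tendsto_integral_div_ofReal_sub_add_mul_I {f : ℝ → ℂ} {a b x₀ : ℝ} {K : NNReal}
    (hf : LipschitzOnWith K f (uIcc a b)) (hx₀ : x₀ ∈ Ioo a b) :
    Tendsto (fun ε : ℝ => ∫ x in a..b, f x / (x - (x₀ + ε * I))) (𝓝[>] 0)
      (𝓝 (cauchyPrincipalValue f a b x₀ + Real.pi * I * f x₀)) := by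
  have hz : Tendsto (fun ε : ℝ => (x₀ : ℂ) + ε * I) (𝓝[>] 0) (𝓝 x₀) :=
    ((continuous_const.add (continuous_ofReal.mul continuous_const)).tendsto' 0 _
      (by simp)).mono_left nhdsWithin_le_nhds
  have hlog := tendsto_log_nhdsWithin_im_neg_of_re_neg_of_im_zero (z := a - x₀)
    (by simpa using hx₀.1) (by simp)
  have hA : Tendsto (fun ε : ℝ => log (a - (x₀ + ε * I))) (𝓝[>] 0)
      (𝓝 (Real.log (x₀ - a) + -(Real.pi * I))) := by
    rw [norm_ofReal_sub_ofReal_of_lt hx₀.1] at hlog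
    rw [← sub_eq_add_neg]
    refine hlog.comp (tendsto_nhdsWithin_iff.2 ⟨tendsto_const_nhds.sub hz, ?_⟩)
    filter_upwards [self_mem_nhdsWithin] with ε hε
    simpa using hε
  convert tendsto_integral_div_ofReal_sub hf hx₀ hz (Eventually.of_forall fun ε => by simp)
    (by filter_upwards [self_mem_nhdsWithin] with ε hε; simpa using hε.ne') hA using 2
  ring

lemma tendsto_integral_div_ofReal_sub_sub_mul_I {f : ℝ → ℂ} {a b x₀ : ℝ} {K : NNReal}
    (hf : LipschitzOnWith K f (uIcc a b)) (hx₀ : x₀ ∈ Ioo a b) :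
    Tendsto (fun ε : ℝ => ∫ x in a..b, f x / (x - (x₀ - ε * I))) (𝓝[>] 0)
      (𝓝 (cauchyPrincipalValue f a b x₀ - Real.pi * I * f x₀)) := by
  have hz : Tendsto (fun ε : ℝ => (x₀ : ℂ) - ε * I) (𝓝[>] 0) (𝓝 x₀) :=
    ((continuous_const.sub (continuous_ofReal.mul continuous_const)).tendsto' 0 _
      (by simp)).mono_left nhdsWithin_le_nhds
  have hlog := tendsto_log_nhdsWithin_im_nonneg_of_re_neg_of_im_zero (z := a - x₀)
    (by simpa using hx₀.1) (by simp)
  have hA : Tendsto (fun ε : ℝ => log (a - (x₀ - ε * I))) (𝓝[>] 0)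
      (𝓝 (Real.log (x₀ - a) + Real.pi * I)) := by
    rw [norm_ofReal_sub_ofReal_of_lt hx₀.1] at hlog
    refine hlog.comp (tendsto_nhdsWithin_iff.2 ⟨tendsto_const_nhds.sub hz, ?_⟩)
    filter_upwards [self_mem_nhdsWithin] with ε hε
    simpa using hε.le
  convert tendsto_integral_div_ofReal_sub hf hx₀ hz (Eventually.of_forall fun ε => by simp)
    (by filter_upwards [self_mem_nhdsWithin] with ε hε; simpa using hε.ne') hA using 2
  ring

lemma DifferentiableOn.exists_lipschitzOnWith_comp_ofReal {g : ℂ → ℂ} {U : Set ℂ}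
    (hg : DifferentiableOn ℂ g U) (hU : IsOpen U) {s : Set ℝ} (hs : Convex ℝ s)
    (hs' : IsCompact s) (hsU : ofReal '' s ⊆ U) :
    ∃ K, LipschitzOnWith K (fun x : ℝ => g x) s :=
  ((((hg.contDiffOn hU).restrict_scalars ℝ).comp ofRealCLM.contDiff.contDiffOn
    (mapsTo_iff_image_subset.2 hsU)).exists_lipschitzOnWith (n := 1) one_ne_zero hs hs')

theorem stmt9_general (a b : ℝ) (U : Set ℂ) (hU : IsOpen U)
    (hUab : (fun x : ℝ => (x : ℂ)) '' Set.Icc a b ⊆ U)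
    (F : ℂ → ℂ) (hF : DifferentiableOn ℂ F U)
    (hF1 : ∀ lam ∈ U, ∀ r : ℝ, r ≤ 0 → 1 + F lam ≠ (r : ℂ))
    (ν : ℂ → ℂ) (hν : ∀ z, ν z = -(1 / (2 * Real.pi * Complex.I)) * Complex.log (1 + F z))
    (α : ℂ → ℂ) (hα : ∀ lam : ℂ, α lam = Complex.exp (∫ μ in a..b, ν μ / (μ - lam)))
    (lam₀ : ℝ) (hlam₀ : lam₀ ∈ Set.Ioo a b) :
    ∃ αp αm : ℂ,
      Filter.Tendsto (fun ε : ℝ => α ((lam₀ : ℂ) + ε * Complex.I)) (𝓝[>] 0) (𝓝 αp) ∧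
      Filter.Tendsto (fun ε : ℝ => α ((lam₀ : ℂ) - ε * Complex.I)) (𝓝[>] 0) (𝓝 αm) ∧
      αp ≠ 0 ∧ αm ≠ 0 ∧ αp * (1 + F (lam₀ : ℂ)) = αm := by
  have hslit : ∀ z ∈ U, 1 + F z ∈ slitPlane := fun z hz =>
    mem_slitPlane_of_forall_ne_ofReal (hF1 z hz)
  have hνU : DifferentiableOn ℂ ν U := by
    rw [funext hν]
    exact ((hF.const_add 1).clog hslit).const_mul _
  obtain ⟨K, hK⟩ := hνU.exists_lipschitzOnWith_comp_ofReal hU (convex_uIcc a b) isCompact_uIcc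
    (by rwa [uIcc_of_le (hlam₀.1.trans hlam₀.2).le])
  set pv := cauchyPrincipalValue (fun x : ℝ => ν x) a b lam₀
  refine ⟨exp (pv + Real.pi * I * ν lam₀), exp (pv - Real.pi * I * ν lam₀), ?_, ?_,
    exp_ne_zero _, exp_ne_zero _, ?_⟩
  · simp only [hα]
    exact (continuous_exp.tendsto _).comp (tendsto_integral_div_ofReal_sub_add_mul_I hK hlam₀)
  · simp only [hα]
    exact (continuous_exp.tendsto _).comp (tendsto_integral_div_ofReal_sub_sub_mul_I hK hlam₀)
  · have h1F : 1 + F lam₀ ≠ 0 :=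
      slitPlane_ne_zero (hslit _ (hUab ⟨lam₀, Ioo_subset_Icc_self hlam₀, rfl⟩))
    rw [← exp_log h1F, ← exp_add, hν]
    congr 1
    field_simp
    ring

/-- the boundary values `α₊, α₋` of `α(λ) = exp(∫_a^b ν(μ)/(μ-λ) dμ)`
on `(a,b)` exist, are nonzero, and satisfy the multiplicative jump relation
`α₊(λ₀)(1 + F(λ₀)) = α₋(λ₀)`. -/
theorem stmt9 (a b : ℝ) (hab : a < b) (U : Set ℂ) (hU : IsOpen U)
    (hUab : (fun x : ℝ => (x : ℂ)) '' Set.Icc a b ⊆ U)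
    (F : ℂ → ℂ) (hF : DifferentiableOn ℂ F U)
    (hF1 : ∀ lam ∈ U, ∀ r : ℝ, r ≤ 0 → 1 + F lam ≠ (r : ℂ))
    (ν : ℂ → ℂ) (hν : ∀ z, ν z = -(1 / (2 * Real.pi * Complex.I)) * Complex.log (1 + F z))
    (α : ℂ → ℂ) (hα : ∀ lam : ℂ, α lam = Complex.exp (∫ μ in a..b, ν μ / (μ - lam)))
    (lam₀ : ℝ) (hlam₀ : lam₀ ∈ Set.Ioo a b) :
    ∃ αp αm : ℂ,
      Filter.Tendsto (fun ε : ℝ => α ((lam₀ : ℂ) + ε * Complex.I)) (𝓝[>] 0) (𝓝 αp) ∧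
      Filter.Tendsto (fun ε : ℝ => α ((lam₀ : ℂ) - ε * Complex.I)) (𝓝[>] 0) (𝓝 αm) ∧
      αp ≠ 0 ∧ αm ≠ 0 ∧ αp * (1 + F (lam₀ : ℂ)) = αm :=
  stmt9_general a b U hU hUab F hF hF1 ν hν α hα lam₀ hlam₀
end

section
/- Let a < b be real, U ⊆ ℂ open with [a,b] ⊂ U, and ν holomorphic on U. Set α(λ) = exp(∫_a^b ν(μ)/(μ−λ) dμ) and L(λ) = ∫_a^b 1/(μ−λ) dμ for λ ∈ ℂ∖[a,b]. Then for each endpoint ς ∈ {a,b} there exist constants C ≥ 1 and δ > 0 such that for all λ ∉ [a,b] with 0 < |λ − ς| < δ one has C⁻¹ ≤ | α(λ) · exp(−ν(ς)·L(λ)) | ≤ C. (Here L(λ) is a holomorphic branch of log((λ−b)/(λ−a)) on ℂ∖[a,b], so this says α(λ) behaves like w(λ)^{ν(ς)} with w(λ) = (λ−b)/(λ−a) near ς.) -/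
/-!
Writing `ν(μ) = (ν(μ) - ν(λ)) + ν(λ)` splits the exponent of `α(λ) exp(-ν(ς) L(λ))` as
`∫_a^b (ν(μ) - ν(λ))/(μ - λ) dμ + (ν(λ) - ν(ς)) L(λ)`. On a compact convex neighbourhood of
`[a,b]` inside `U` the function `ν` is Lipschitz, so the integral is bounded and the second term is
`O(|λ - ς| |L(λ)|)`. Choosing `c = ±1` so that `c (μ - λ)` stays in the slit plane for `μ ∈ [a,b]`
gives `L(λ) = log (c (b - λ)) - log (c (a - λ))`, hence `|L(λ)| ≤ |log |λ - ς|| + O(1)` near the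
endpoint `ς`, and `r |log r|` is bounded for `0 < r ≤ 1`. So the exponent is bounded near `ς`.
-/

open Complex Set MeasureTheory intervalIntegral Metric Filter Topology

theorem Complex.norm_log_le_abs_log_norm_add_pi (z : ℂ) :
    ‖log z‖ ≤ |Real.log ‖z‖| + Real.pi :=
  calc ‖log z‖ ≤ |(log z).re| + |(log z).im| := norm_le_abs_re_add_abs_im _
    _ ≤ |Real.log ‖z‖| + Real.pi := by
      rw [log_re, log_im]
      exact add_le_add_right (abs_arg_le_pi z) _

theorem integral_one_div_ofReal_sub_eq_log_sub {a b : ℝ} {lam c : ℂ}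
    (hc : ∀ μ ∈ uIcc a b, c * ((μ : ℂ) - lam) ∈ slitPlane) :
    ∫ μ in a..b, 1 / ((μ : ℂ) - lam) = log (c * (b - lam)) - log (c * (a - lam)) := by
  have hne : ∀ μ ∈ uIcc a b, c ≠ 0 ∧ (μ : ℂ) - lam ≠ 0 := fun μ hμ =>
    mul_ne_zero_iff.1 (slitPlane_ne_zero (hc μ hμ))
  refine intervalIntegral.integral_eq_sub_of_hasDerivAt (f := fun μ : ℝ => log (c * (μ - lam))) (fun μ hμ => ?_) ?_
  · have h := (((hasDerivAt_id (μ : ℂ)).sub_const lam).const_mul c).clog (hc μ hμ)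
    rw [mul_div_mul_left _ _ (hne μ hμ).1] at h
    exact h.comp_ofReal
  · exact (continuousOn_const.div (by fun_prop) fun μ hμ => (hne μ hμ).2).intervalIntegrable

theorem exists_norm_eq_one_mul_sub_mem_slitPlane {a b : ℝ} {lam : ℂ}
    (hlam : lam ∉ (fun x : ℝ => (x : ℂ)) '' Icc a b) :
    ∃ c : ℂ, ‖c‖ = 1 ∧ ∀ μ ∈ Icc a b, c * ((μ : ℂ) - lam) ∈ slitPlane := by
  by_cases him : lam.im = 0
  · have hre : lam.re < a ∨ b < lam.re := by
      by_contra! h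
      exact hlam ⟨lam.re, h, ext (by simp) (by simp [him])⟩
    rcases hre with hre | hre
    · refine ⟨1, norm_one, fun μ hμ => mem_slitPlane_iff.2 (Or.inl ?_)⟩
      simp only [one_mul, sub_re, ofReal_re]
      linarith [hμ.1]
    · refine ⟨-1, by simp, fun μ hμ => mem_slitPlane_iff.2 (Or.inl ?_)⟩
      simp only [neg_one_mul, neg_re, sub_re, ofReal_re]
      linarith [hμ.2]
  · exact ⟨1, norm_one, fun μ _ => mem_slitPlane_iff.2 (Or.inr (by simpa using him))⟩

theorem norm_integral_one_div_ofReal_sub_le {a b : ℝ} (hab : a ≤ b) {lam : ℂ}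
    (hlam : lam ∉ (fun x : ℝ => (x : ℂ)) '' Icc a b) :
    ‖∫ μ in a..b, 1 / ((μ : ℂ) - lam)‖ ≤
      |Real.log ‖(a : ℂ) - lam‖| + |Real.log ‖(b : ℂ) - lam‖| + 2 * Real.pi := by
  obtain ⟨c, hc1, hc⟩ := exists_norm_eq_one_mul_sub_mem_slitPlane hlam
  rw [integral_one_div_ofReal_sub_eq_log_sub (by rwa [uIcc_of_le hab])]
  have hlog := fun x : ℂ => norm_log_le_abs_log_norm_add_pi (c * (x - lam))
  simp only [norm_mul, hc1, one_mul] at hlog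
  linarith [norm_sub_le (log (c * (b - lam))) (log (c * (a - lam))), hlog b, hlog a]

theorem integral_div_ofReal_sub_eq_s10 {a b : ℝ} {ν : ℂ → ℂ} {lam : ℂ}
    (hν : ContinuousOn (fun μ : ℝ => ν μ) (uIcc a b)) (hlam : ∀ μ ∈ uIcc a b, (μ : ℂ) ≠ lam) :
    ∫ μ in a..b, ν μ / ((μ : ℂ) - lam) =
      (∫ μ in a..b, (ν μ - ν lam) / ((μ : ℂ) - lam)) +
        ν lam * ∫ μ in a..b, 1 / ((μ : ℂ) - lam) := by
  have hden : ∀ μ ∈ uIcc a b, (μ : ℂ) - lam ≠ 0 := fun μ hμ => sub_ne_zero.2 (hlam μ hμ)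
  have h₁ : IntervalIntegrable (fun μ : ℝ => (ν μ - ν lam) / ((μ : ℂ) - lam)) volume a b :=
    ((hν.sub continuousOn_const).div (by fun_prop) hden).intervalIntegrable
  have h₂ : IntervalIntegrable (fun μ : ℝ => 1 / ((μ : ℂ) - lam)) volume a b :=
    (continuousOn_const.div (by fun_prop) hden).intervalIntegrable
  rw [← intervalIntegral.integral_const_mul, ← intervalIntegral.integral_add h₁ (h₂.const_mul _)]
  exact integral_congr fun μ _ => by ring

theorem norm_integral_sub_div_ofReal_sub_le {a b : ℝ} (hab : a ≤ b) {ν : ℂ → ℂ} {C : NNReal}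
    {s : Set ℂ} (hν : LipschitzOnWith C ν s) (hs : (fun x : ℝ => (x : ℂ)) '' Icc a b ⊆ s)
    {lam : ℂ} (hlam : lam ∈ s) :
    ‖∫ μ in a..b, (ν μ - ν lam) / ((μ : ℂ) - lam)‖ ≤ C * (b - a) := by
  have hbound : ∀ μ ∈ uIoc a b, ‖(ν μ - ν lam) / ((μ : ℂ) - lam)‖ ≤ C := fun μ hμ => by
    have hμ' : μ ∈ Icc a b := Ioc_subset_Icc_self (by rwa [uIoc_of_le hab] at hμ)
    rw [norm_div]
    exact div_le_of_le_mul₀ (norm_nonneg _) C.2 (hν.norm_sub_le (hs ⟨μ, hμ', rfl⟩) hlam)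
  simpa [abs_of_nonneg (sub_nonneg.2 hab)] using norm_integral_le_of_norm_le_const hbound

theorem DifferentiableOn.exists_lipschitzOnWith_cthickening {E : Type*} [NormedAddCommGroup E]
    [NormedSpace ℂ E] [CompleteSpace E] {f : ℂ → E} {U K : Set ℂ} (hf : DifferentiableOn ℂ f U) (hU : IsOpen U)
    (hK : IsCompact K) (hKc : Convex ℝ K) (hKU : K ⊆ U) :
    ∃ ε > 0, ∃ C, LipschitzOnWith C f (cthickening ε K) := by
  obtain ⟨ε, hε, hεU⟩ := hK.exists_cthickening_subset_open hU hKU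
  obtain ⟨C, hC⟩ := (((hf.contDiffOn (n := 1) hU).restrict_scalars ℝ).mono hεU).exists_lipschitzOnWith
    one_ne_zero (hKc.cthickening ε) hK.cthickening
  exact ⟨ε, hε, C, hC⟩

theorem eventually_norm_sub_mul_norm_integral_one_div_ofReal_sub_le {a b ς : ℝ} (hab : a < b)
    (hς : ς = a ∨ ς = b) :
    ∃ K, ∀ᶠ lam in 𝓝 (ς : ℂ), lam ∉ (fun x : ℝ => (x : ℂ)) '' Icc a b →
      ‖lam - ς‖ * ‖∫ μ in a..b, 1 / ((μ : ℂ) - lam)‖ ≤ K := by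
  -- `a + b - ς` is the other endpoint
  have hL : ∀ lam ∉ (fun x : ℝ => (x : ℂ)) '' Icc a b, ‖∫ μ in a..b, 1 / ((μ : ℂ) - lam)‖ ≤
      |Real.log ‖lam - ς‖| + (|Real.log ‖((a + b - ς : ℝ) : ℂ) - lam‖| + 2 * Real.pi) := by
    intro lam hlam
    have h := norm_integral_one_div_ofReal_sub_le hab.le hlam
    rw [norm_sub_rev lam]
    rcases hς with rfl | rfl
    · rw [add_sub_cancel_left]; linarith
    · rw [add_sub_cancel_right]; linarith
  have hne : ‖((a + b - ς : ℝ) : ℂ) - ς‖ ≠ 0 := by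
    rw [← ofReal_sub, norm_real, Real.norm_eq_abs]
    rcases hς with rfl | rfl <;> (apply abs_ne_zero.2; linarith)
  have hcont : ContinuousAt (fun lam : ℂ => |Real.log ‖((a + b - ς : ℝ) : ℂ) - lam‖|) ς :=
    ((continuous_const.sub continuous_id).norm.continuousAt.log hne).abs
  set K := |Real.log ‖((a + b - ς : ℝ) : ℂ) - ς‖| + 1 + 2 * Real.pi
  have hK : 0 ≤ K := by positivity
  refine ⟨1 + K, ?_⟩
  filter_upwards [hcont.eventually_le_const (lt_add_one _), closedBall_mem_nhds (ς : ℂ) one_pos]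
    with lam hlog hball hlam
  have hr : 0 < ‖lam - ς‖ := by
    refine norm_pos_iff.2 (sub_ne_zero.2 fun h => hlam ⟨ς, ?_, h.symm⟩)
    rcases hς with rfl | rfl <;> simp [hab.le]
  have hr1 : ‖lam - ς‖ ≤ 1 := by rwa [mem_closedBall, dist_eq_norm] at hball
  calc ‖lam - ς‖ * ‖∫ μ in a..b, 1 / ((μ : ℂ) - lam)‖
      ≤ ‖lam - ς‖ * (|Real.log ‖lam - ς‖| + K) :=
        mul_le_mul_of_nonneg_left (by linarith [hL lam hlam]) hr.le
    _ = |Real.log ‖lam - ς‖ * ‖lam - ς‖| + ‖lam - ς‖ * K := by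
        rw [abs_mul, abs_of_pos hr]; ring
    _ ≤ 1 + K := add_le_add (Real.abs_log_mul_self_lt _ hr hr1).le (mul_le_of_le_one_left hK hr1)

theorem exists_eventually_norm_integral_div_ofReal_sub_sub_le {a b ς : ℝ} (hab : a < b)
    {U : Set ℂ} (hU : IsOpen U) (hUab : (fun x : ℝ => (x : ℂ)) '' Icc a b ⊆ U) {ν : ℂ → ℂ}
    (hν : DifferentiableOn ℂ ν U) (hς : ς = a ∨ ς = b) :
    ∃ B, ∀ᶠ lam in 𝓝 (ς : ℂ), lam ∉ (fun x : ℝ => (x : ℂ)) '' Icc a b →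
      ‖(∫ μ in a..b, ν μ / (μ - lam)) - ν ς * ∫ μ in a..b, 1 / ((μ : ℂ) - lam)‖ ≤ B := by
  set S := (fun x : ℝ => (x : ℂ)) '' Icc a b
  have hςS : (ς : ℂ) ∈ S := ⟨ς, by rcases hς with rfl | rfl <;> simp [hab.le], rfl⟩
  obtain ⟨ε, hε, C, hC⟩ := hν.exists_lipschitzOnWith_cthickening hU
    (isCompact_Icc.image continuous_ofReal) ((convex_Icc a b).linear_image ofRealCLM.toLinearMap)
    hUab
  obtain ⟨K, hK⟩ := eventually_norm_sub_mul_norm_integral_one_div_ofReal_sub_le hab hς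
  have hV : cthickening ε S ∈ 𝓝 (ς : ℂ) :=
    mem_of_superset (closedBall_mem_nhds _ hε) (closedBall_subset_cthickening hςS ε)
  refine ⟨C * (b - a) + C * K, ?_⟩
  filter_upwards [hK, hV] with lam hlamK hlamV hlam
  have hνS : ContinuousOn (fun μ : ℝ => ν μ) (uIcc a b) :=
    hν.continuousOn.comp continuous_ofReal.continuousOn fun μ hμ =>
      hUab ⟨μ, by rwa [uIcc_of_le hab.le] at hμ, rfl⟩
  rw [integral_div_ofReal_sub_eq_s10 hνS fun μ hμ h => hlam ⟨μ, by rwa [uIcc_of_le hab.le] at hμ, h⟩]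
  set L := ∫ μ in a..b, 1 / ((μ : ℂ) - lam)
  calc ‖(∫ μ in a..b, (ν μ - ν lam) / ((μ : ℂ) - lam)) + ν lam * L - ν ς * L‖
      = ‖(∫ μ in a..b, (ν μ - ν lam) / ((μ : ℂ) - lam)) + (ν lam - ν ς) * L‖ := by
        congr 1; ring
    _ ≤ ‖∫ μ in a..b, (ν μ - ν lam) / ((μ : ℂ) - lam)‖ + ‖ν lam - ν ς‖ * ‖L‖ :=
        (norm_add_le _ _).trans_eq (by rw [norm_mul])
    _ ≤ C * (b - a) + C * ‖lam - ς‖ * ‖L‖ := by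
        gcongr
        · exact norm_integral_sub_div_ofReal_sub_le hab.le hC (self_subset_cthickening S) hlamV
        · exact hC.norm_sub_le hlamV (self_subset_cthickening S hςS)
    _ ≤ C * (b - a) + C * K := by
        rw [mul_assoc]; gcongr; exact hlamK hlam

/-- near an endpoint `ς ∈ {a,b}` the function
`α(λ) = exp(∫_a^b ν(μ)/(μ-λ) dμ)` behaves like `w(λ)^{ν(ς)}` with
`w(λ) = (λ-b)/(λ-a)`: with `L(λ) = ∫_a^b dμ/(μ-λ)` (a branch of `log w`),
the quantity `|α(λ) exp(-ν(ς) L(λ))|` is bounded above and below near `ς`. -/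
theorem stmt10 (a b : ℝ) (hab : a < b) (U : Set ℂ) (hU : IsOpen U)
    (hUab : (fun x : ℝ => (x : ℂ)) '' Set.Icc a b ⊆ U)
    (ν : ℂ → ℂ) (hν : DifferentiableOn ℂ ν U)
    (α : ℂ → ℂ) (hα : ∀ lam : ℂ, α lam = Complex.exp (∫ μ in a..b, ν μ / (μ - lam)))
    (L : ℂ → ℂ) (hL : ∀ lam : ℂ, L lam = ∫ μ in a..b, 1 / ((μ : ℂ) - lam))
    (ς : ℝ) (hς : ς = a ∨ ς = b) :
    ∃ C ≥ (1 : ℝ), ∃ δ > (0 : ℝ),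
      ∀ lam : ℂ, lam ∉ (fun x : ℝ => (x : ℂ)) '' Set.Icc a b →
        0 < ‖lam - (ς : ℂ)‖ → ‖lam - (ς : ℂ)‖ < δ →
          C⁻¹ ≤ ‖α lam * Complex.exp (-(ν (ς : ℂ)) * L lam)‖ ∧
          ‖α lam * Complex.exp (-(ν (ς : ℂ)) * L lam)‖ ≤ C := by
  obtain ⟨B, hB⟩ := exists_eventually_norm_integral_div_ofReal_sub_sub_le hab hU hUab hν hς
  obtain ⟨δ, hδ, hδB⟩ := Metric.eventually_nhds_iff.1 hB
  refine ⟨Real.exp |B|, Real.one_le_exp (abs_nonneg B), δ, hδ, fun lam hlam _ hlamδ => ?_⟩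
  have hre := abs_le.1 ((abs_re_le_norm _).trans
    ((hδB (by rwa [dist_eq_norm]) hlam).trans (le_abs_self B)))
  rw [hα, hL, ← Complex.exp_add, norm_exp, ← Real.exp_neg, neg_mul, ← sub_eq_add_neg]
  exact ⟨Real.exp_le_exp.2 hre.1, Real.exp_le_exp.2 hre.2⟩
end

section
/- Let c > 0, x ∈ ℝ, let p, F be complex-valued functions, and let λ ≠ μ in ℂ and t ∈ ℂ satisfy Re(c + it(λ−μ)) > 0 and Re(c − it(λ−μ)) > 0. Define S(λ,μ) = −(c F(λ)/(2iπ)) · ∫₀^∞ s e^{−cs} [ e^{(ix/2)(p(μ)−p(λ))} e^{−ist(λ−μ)} + e^{(ix/2)(p(λ)−p(μ))} e^{ist(λ−μ)} ] ds. Then for any counterclockwise circle Γ of center z₀ and radius R with |λ − z₀| < R and |μ − z₀| < R, one has ∂_t V_t(λ,μ) = − (1/(2π)) ∮_Γ z/((z−λ)(z−μ)) dz · S(λ,μ). -/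
open Complex MeasureTheory Set Filter Topology Metric
open scoped Real

/-!
Both sides are explicit. By partial fractions the contour integral equals `2πi`, the sum of
the residues `λ/(λ-μ)` and `μ/(μ-λ)`. In the `s`-integral the two exponentials combine into
Laplace transforms `∫₀^∞ s e^{-a s} ds = 1/a²` with `a = c ± i t (λ-μ)`, which converge
because `Re a > 0`. Differentiating `V_t` in `t` gives the same squares, since
`(t(λ-μ) ± i c)² = -(c ∓ i t (λ-μ))²`.
-/

theorem tendsto_ofReal_pow_mul_cexp_neg_mul_atTop (n : ℕ) {a : ℂ} (ha : 0 < a.re) :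
    Tendsto (fun s : ℝ => (s : ℂ) ^ n * cexp (-a * s)) atTop (𝓝 0) := by
  rw [tendsto_zero_iff_norm_tendsto_zero]
  refine (tendsto_rpow_mul_exp_neg_mul_atTop_nhds_zero n a.re ha).congr' ?_
  filter_upwards [eventually_ge_atTop 0] with s hs
  simp [Complex.norm_exp, abs_of_nonneg hs]

theorem integrableOn_ofReal_mul_cexp_neg_mul_Ioi {a : ℂ} (ha : 0 < a.re) :
    IntegrableOn (fun s : ℝ => (s : ℂ) * cexp (-a * s)) (Ioi 0) := by
  have hreal := integrableOn_rpow_mul_exp_neg_mul_rpow (s := 1) (p := 1) (by norm_num) one_pos ha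
  simp only [Real.rpow_one] at hreal
  refine hreal.mono' (by fun_prop) ?_
  filter_upwards [ae_restrict_mem measurableSet_Ioi] with s hs
  simp [Complex.norm_exp, abs_of_pos (mem_Ioi.mp hs)]

theorem integral_ofReal_mul_cexp_neg_mul_Ioi {a : ℂ} (ha : 0 < a.re) :
    ∫ s in Ioi (0 : ℝ), (s : ℂ) * cexp (-a * s) = 1 / a ^ 2 := by
  have ha0 : a ≠ 0 := fun h => by simp [h] at ha
  set f : ℝ → ℂ := fun s => -((s / a + 1 / a ^ 2) * cexp (-a * s))
  have hderiv (s : ℝ) : HasDerivAt f ((s : ℂ) * cexp (-a * s)) s := by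
    have h := (((hasDerivAt_id (s : ℂ)).div_const a).add_const (1 / a ^ 2)).mul
      ((hasDerivAt_id (s : ℂ)).const_mul (-a)).cexp |>.neg
    refine (h.congr_deriv ?_).comp_ofReal
    simp only [id]
    field_simp
    ring
  have hlim : Tendsto f atTop (𝓝 0) := by
    have h := ((tendsto_ofReal_pow_mul_cexp_neg_mul_atTop 1 ha).const_mul (1 / a)).add
      ((tendsto_ofReal_pow_mul_cexp_neg_mul_atTop 0 ha).const_mul (1 / a ^ 2)) |>.neg
    simp only [mul_zero, add_zero, neg_zero] at h
    refine h.congr fun s => ?_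
    simp only [f]
    ring
  rw [integral_Ioi_of_hasDerivAt_of_tendsto' (fun s _ => hderiv s)
    (integrableOn_ofReal_mul_cexp_neg_mul_Ioi ha) hlim]
  simp [f]

theorem circleIntegral_div_sub_mul_sub {z₀ a b : ℂ} {R : ℝ} (hab : a ≠ b)
    (ha : a ∈ ball z₀ R) (hb : b ∈ ball z₀ R) :
    (∮ z in C(z₀, R), z / ((z - a) * (z - b))) = 2 * π * I := by
  have hR : 0 < R := dist_nonneg.trans_lt ha
  have hab' : a - b ≠ 0 := sub_ne_zero.mpr hab
  have hne {w z : ℂ} (hw : w ∈ ball z₀ R) (hz : z ∈ sphere z₀ R) : z - w ≠ 0 :=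
    sub_ne_zero.mpr fun h => (mem_ball.mp hw).ne (h ▸ mem_sphere.mp hz)
  have hint {w : ℂ} (hw : w ∈ ball z₀ R) : CircleIntegrable (fun z => (z - w)⁻¹) z₀ R :=
    circleIntegrable_sub_inv_iff.mpr <| Or.inr fun h =>
      hne hw (by rwa [abs_of_pos hR] at h) (sub_self w)
  -- partial fractions: the residues `a / (a - b)` and `b / (b - a)` add up to `1`
  have hpf : EqOn (fun z => z / ((z - a) * (z - b)))
      (fun z => (a / (a - b)) • (z - a)⁻¹ - (b / (a - b)) • (z - b)⁻¹)
      (sphere z₀ R) := by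
    intro z hz
    have := hne ha hz
    have := hne hb hz
    simp only [smul_eq_mul]
    field_simp
    ring
  rw [circleIntegral.integral_congr hR.le hpf, circleIntegral.integral_sub
    ((hint ha).const_fun_smul) ((hint hb).const_fun_smul), circleIntegral.integral_smul,
    circleIntegral.integral_smul, circleIntegral.integral_sub_inv_of_mem_ball ha,
    circleIntegral.integral_sub_inv_of_mem_ball hb, smul_eq_mul, smul_eq_mul]
  field_simp

theorem hasDerivAt_div_mul_add_I_add_div_mul_sub_I (A B d : ℂ) (c : ℝ) (t : ℂ)
    (h₁ : (c : ℂ) + I * t * d ≠ 0) (h₂ : (c : ℂ) - I * t * d ≠ 0) :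
    HasDerivAt (fun s => A / (s * d + I * c) + B / (s * d - I * c))
      (A * d / (c - I * t * d) ^ 2 + B * d / (c + I * t * d) ^ 2) t := by
  have hp : t * d + I * c = I * (c - I * t * d) := by
    linear_combination t * d * I_sq
  have hm : t * d - I * c = -I * (c + I * t * d) := by
    linear_combination t * d * I_sq
  have hp0 : t * d + I * c ≠ 0 := hp ▸ mul_ne_zero I_ne_zero h₂
  have hm0 : t * d - I * c ≠ 0 := hm ▸ mul_ne_zero (neg_ne_zero.mpr I_ne_zero) h₁
  have h := (((((hasDerivAt_id t).mul_const d).add_const (I * c)).inv hp0).const_mul A).add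
    (((((hasDerivAt_id t).mul_const d).sub_const (I * c)).inv hm0).const_mul B)
  refine (h.congr_deriv ?_).congr_of_eventuallyEq (Eventually.of_forall fun s => ?_)
  · simp only [id, one_mul]
    rw [hp, hm]
    field_simp
    rw [I_sq]
    ring
  · simp [div_eq_mul_inv]

theorem integral_Ioi_ofReal_mul_cexp_neg_mul_two_sided {c : ℝ} {t d : ℂ} (A B : ℂ)
    (h₁ : 0 < ((c : ℂ) + I * t * d).re) (h₂ : 0 < ((c : ℂ) - I * t * d).re) :
    ∫ s in Ioi (0 : ℝ), (s : ℂ) * cexp (-(c : ℂ) * s) *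
        (B * cexp (-(I * s * t * d)) + A * cexp (I * s * t * d)) =
      B / (c + I * t * d) ^ 2 + A / (c - I * t * d) ^ 2 := by
  have hsplit (s : ℝ) : (s : ℂ) * cexp (-(c : ℂ) * s) *
      (B * cexp (-(I * s * t * d)) + A * cexp (I * s * t * d)) =
      B * ((s : ℂ) * cexp (-(c + I * t * d) * s)) +
        A * ((s : ℂ) * cexp (-(c - I * t * d) * s)) := by
    have e₁ : cexp (-(c + I * t * d) * s) = cexp (-(c : ℂ) * s) * cexp (-(I * s * t * d)) := by
      rw [← Complex.exp_add]; ring_nf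
    have e₂ : cexp (-(c - I * t * d) * s) = cexp (-(c : ℂ) * s) * cexp (I * s * t * d) := by
      rw [← Complex.exp_add]; ring_nf
    rw [e₁, e₂]
    ring
  simp_rw [hsplit]
  rw [integral_add ((integrableOn_ofReal_mul_cexp_neg_mul_Ioi h₁).const_mul B)
      ((integrableOn_ofReal_mul_cexp_neg_mul_Ioi h₂).const_mul A), integral_const_mul,
    integral_const_mul, integral_ofReal_mul_cexp_neg_mul_Ioi h₁,
    integral_ofReal_mul_cexp_neg_mul_Ioi h₂, mul_one_div, mul_one_div]

theorem stmt14_general (c x : ℝ) (p F : ℂ → ℂ) (lam mu : ℂ) (hne : lam ≠ mu)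
    (t : ℂ)
    (h1 : 0 < ((c : ℂ) + Complex.I * t * (lam - mu)).re)
    (h2 : 0 < ((c : ℂ) - Complex.I * t * (lam - mu)).re)
    (z₀ : ℂ) (R : ℝ) (hlam : ‖lam - z₀‖ < R) (hmu : ‖mu - z₀‖ < R) :
    HasDerivAt
      (fun s : ℂ =>
        (Complex.I * c * F lam) / (2 * Real.pi * Complex.I * (lam - mu)) *
          (Complex.exp ((Complex.I * x / 2) * (p lam - p mu)) / (s * (lam - mu) + Complex.I * c)
            + Complex.exp ((Complex.I * x / 2) * (p mu - p lam)) / (s * (lam - mu) - Complex.I * c)))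
      (-(1 / (2 * Real.pi)) * (∮ z in C(z₀, R), z / ((z - lam) * (z - mu))) *
        (-(c * F lam / (2 * Real.pi * Complex.I)) *
          ∫ s in Ioi (0 : ℝ), (s : ℂ) * Complex.exp (-(c : ℂ) * s) *
            (Complex.exp ((Complex.I * x / 2) * (p mu - p lam)) *
                Complex.exp (-(Complex.I * s * t * (lam - mu)))
              + Complex.exp ((Complex.I * x / 2) * (p lam - p mu)) *
                Complex.exp (Complex.I * s * t * (lam - mu)))))
      t := by
  have hd : lam - mu ≠ 0 := sub_ne_zero.mpr hne
  have ha : (c : ℂ) + I * t * (lam - mu) ≠ 0 := fun h => by simp [h] at h1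
  have hb : (c : ℂ) - I * t * (lam - mu) ≠ 0 := fun h => by simp [h] at h2
  rw [circleIntegral_div_sub_mul_sub hne (mem_ball_iff_norm.mpr hlam) (mem_ball_iff_norm.mpr hmu),
    integral_Ioi_ofReal_mul_cexp_neg_mul_two_sided _ _ h1 h2]
  refine ((hasDerivAt_div_mul_add_I_add_div_mul_sub_I _ _ _ c t ha hb).const_mul _).congr_deriv ?_
  field_simp
  ring

/-- with `S(λ,μ) = -(c F(λ)/(2iπ)) ∫₀^∞ s e^{-cs}
[ e^{(ix/2)(p(μ)-p(λ))} e^{-ist(λ-μ)} + e^{(ix/2)(p(λ)-p(μ))} e^{ist(λ-μ)} ] ds`,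
the `t`-derivative of the c-shifted kernel is given by the contour formula
`∂_t V_t(λ,μ) = -(1/(2π)) ∮_Γ z/((z-λ)(z-μ)) dz · S(λ,μ)` for any counterclockwise
circle `Γ` enclosing `λ` and `μ`. -/
theorem stmt14 (c x : ℝ) (hc : 0 < c) (p F : ℂ → ℂ) (lam mu : ℂ) (hne : lam ≠ mu)
    (t : ℂ)
    (h1 : 0 < ((c : ℂ) + Complex.I * t * (lam - mu)).re)
    (h2 : 0 < ((c : ℂ) - Complex.I * t * (lam - mu)).re)
    (z₀ : ℂ) (R : ℝ) (hlam : ‖lam - z₀‖ < R) (hmu : ‖mu - z₀‖ < R) :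
    HasDerivAt
      (fun s : ℂ =>
        (Complex.I * c * F lam) / (2 * Real.pi * Complex.I * (lam - mu)) *
          (Complex.exp ((Complex.I * x / 2) * (p lam - p mu)) / (s * (lam - mu) + Complex.I * c)
            + Complex.exp ((Complex.I * x / 2) * (p mu - p lam)) / (s * (lam - mu) - Complex.I * c)))
      (-(1 / (2 * Real.pi)) * (∮ z in C(z₀, R), z / ((z - lam) * (z - mu))) *
        (-(c * F lam / (2 * Real.pi * Complex.I)) *
          ∫ s in Ioi (0 : ℝ), (s : ℂ) * Complex.exp (-(c : ℂ) * s) *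
            (Complex.exp ((Complex.I * x / 2) * (p mu - p lam)) *
                Complex.exp (-(Complex.I * s * t * (lam - mu)))
              + Complex.exp ((Complex.I * x / 2) * (p lam - p mu)) *
                Complex.exp (Complex.I * s * t * (lam - mu)))))
      t :=
  stmt14_general c x p F lam mu hne t h1 h2 z₀ R hlam hmu
end
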